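/- Let ε ∈ (0,1/4], ε₀ := (1−√(1−4ε))/2, p ∈ Δ(K), x a mixed action, and x' := c_{ε₀}(x,p). Then x' is a 6ε-convexification of x at p: there exist nonnegative reals (β_{i i'})_{i,i'∈I} such that (1) for all i ∈ I, p^{x'}(·|i) = ∑_{i'∈I} β_{i i'}·p^x(·|i'); (2) for all i ∈ I, x̄'^p(i) = x̄^p(i); (3) for all i' ∈ I, ∑_{i∈I} β_{i i'}·x̄^p(i) = x̄^p(i'); and (4) for all i ∈ I, ‖p^{x'}(·|i) − p^x(·|i)‖₁ ≤ 6ε. -/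

import Mathlib

open Finset

noncomputable section
open Classical

/-- `p` is an element of the probability simplex Δ(K). -/
def pSimplex {K : Type*} [Fintype K] (p : K → ℝ) : Prop :=
  (∀ k, 0 ≤ p k) ∧ ∑ k, p k = 1

/-- `x : K → Δ(I)` is a mixed action, written `x k i = x(i|k)`. -/
def MixedAction {K I : Type*} [Fintype K] [Fintype I] (x : K → I → ℝ) : Prop :=
  (∀ k i, 0 ≤ x k i) ∧ ∀ k, ∑ i, x k i = 1

/-- Marginal `x̄^p(i) = ∑_k p(k)·x(i|k)`. -/
def bar {K I : Type*} [Fintype K] (p : K → ℝ) (x : K → I → ℝ) (i : I) : ℝ :=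
  ∑ k, p k * x k i

/-- Posterior `p^x(k|i)`. -/
def post {K I : Type*} [Fintype K] (p : K → ℝ) (x : K → I → ℝ) (i : I) (k : K) : ℝ :=
  if bar p x i ≠ 0 then x k i * p k / bar p x i else p k

/-- The set `NR[x,ε,p]` of (x,ε)-non-revealing actions at p. -/
def NRset {K I : Type*} [Fintype K] [Fintype I] (x : K → I → ℝ) (ε : ℝ) (p : K → ℝ) :
    Finset I :=
  Finset.univ.filter fun i =>
    bar p x i ≠ 0 ∧ ∀ k, (1 - ε) * bar p x i ≤ x k i ∧ x k i ≤ (1 + ε) * bar p x i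

/-- The set `R[x,ε,p]` of (x,ε)-revealing actions at p. -/
def Rset {K I : Type*} [Fintype K] [Fintype I] (x : K → I → ℝ) (ε : ℝ) (p : K → ℝ) :
    Finset I :=
  (Finset.univ.filter fun i => bar p x i ≠ 0) \ NRset x ε p

/-- `x(A|k) = ∑_{i∈A} x(i|k)`. -/
def xOn {K I : Type*} (x : K → I → ℝ) (A : Finset I) (k : K) : ℝ := ∑ i ∈ A, x k i

/-- `x̄^p(A) = ∑_{i∈A} x̄^p(i)`. -/
def barOn {K I : Type*} [Fintype K] (p : K → ℝ) (x : K → I → ℝ) (A : Finset I) : ℝ :=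
  ∑ i ∈ A, bar p x i

/-- The ε-silent mapping `c_ε(x,p)`. -/
def silent {K I : Type*} [Fintype K] [Fintype I] (ε : ℝ) (x : K → I → ℝ) (p : K → ℝ) :
    K → I → ℝ :=
  fun k i =>
    if i ∈ NRset x ε p then
      ((1 - ε) * xOn x (NRset x ε p) k / barOn p x (NRset x ε p) + ε) * bar p x i
    else (1 - ε) * x k i + ε * bar p x i

/-! The silent map with parameter `δ` mixes every posterior with the prior: `c_δ(x,p)` gives a
revealing action `i` the posterior `(1-δ) p^x(·|i) + δ p` and every non-revealing action the
posterior `(1-δ) q + δ p`, where `q` is the posterior of the event `NR[x,δ,p]`. Both `p` and `q`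
are `x̄`-weighted averages of the old posteriors, so `β = (1-δ) γ + δ x̄`, with `γ` the kernel
pooling the non-revealing actions, does the job; `γ` and `x̄` both preserve the marginal.
On `NR[x,δ,p]` all likelihood ratios lie in `[1-δ, 1+δ]`, so each posterior moves by at most `2δ`
in `ℓ¹`, and `2ε₀ ≤ 4ε`. -/

section Posterior

variable {K I : Type*} [Fintype K] {p : K → ℝ} {x : K → I → ℝ}

lemma sum_post (hp : pSimplex p) (i : I) : ∑ k, post p x i k = 1 := by
  by_cases h : bar p x i = 0
  · simpa [post, h] using hp.2
  · simp only [post, if_pos h, ← Finset.sum_div]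
    rw [div_eq_one_iff_eq h, bar]
    simp_rw [mul_comm]

lemma sum_mul_xOn (A : Finset I) : ∑ k, p k * xOn x A k = barOn p x A := by
  simp only [xOn, barOn, bar, Finset.mul_sum]
  exact Finset.sum_comm

variable [Fintype I]

lemma bar_nonneg (hp : pSimplex p) (hx : MixedAction x) (i : I) : 0 ≤ bar p x i :=
  Finset.sum_nonneg fun k _ => mul_nonneg (hp.1 k) (hx.1 k i)

lemma barOn_nonneg (hp : pSimplex p) (hx : MixedAction x) (N : Finset I) : 0 ≤ barOn p x N :=
  Finset.sum_nonneg fun j _ => bar_nonneg hp hx j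

lemma bar_le_barOn (hp : pSimplex p) (hx : MixedAction x) {N : Finset I} {i : I} (hi : i ∈ N) :
    bar p x i ≤ barOn p x N :=
  Finset.single_le_sum (fun j _ => bar_nonneg hp hx j) hi

lemma sum_bar (hp : pSimplex p) (hx : MixedAction x) : ∑ i, bar p x i = 1 := by
  simp only [bar]
  rw [Finset.sum_comm]
  simp_rw [← Finset.mul_sum, hx.2, mul_one]
  exact hp.2

lemma bar_mul_post (hp : pSimplex p) (hx : MixedAction x) (i : I) (k : K) :
    bar p x i * post p x i k = x k i * p k := by
  by_cases h : bar p x i = 0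
  · have hk : p k * x k i = 0 :=
      (Finset.sum_eq_zero_iff_of_nonneg fun k _ => mul_nonneg (hp.1 k) (hx.1 k i)).mp h k
        (Finset.mem_univ k)
    rw [h, zero_mul, mul_comm, hk]
  · rw [post, if_pos h]
    field_simp

lemma sum_bar_mul_post (hp : pSimplex p) (hx : MixedAction x) (k : K) :
    ∑ i, bar p x i * post p x i k = p k := by
  simp_rw [bar_mul_post hp hx, ← Finset.sum_mul, hx.2, one_mul]

lemma post_nonneg (hp : pSimplex p) (hx : MixedAction x) (i : I) (k : K) :
    0 ≤ post p x i k := by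
  unfold post
  split
  · exact div_nonneg (mul_nonneg (hx.1 k i) (hp.1 k)) (bar_nonneg hp hx i)
  · exact hp.1 k

end Posterior

section Silent

variable {K I : Type*} [Fintype K] [Fintype I] {p : K → ℝ} {x : K → I → ℝ} {ε : ℝ} {i : I}

lemma bar_ne_zero_of_mem_NRset (hi : i ∈ NRset x ε p) : bar p x i ≠ 0 :=
  (Finset.mem_filter.mp hi).2.1

lemma barOn_NRset_pos (hp : pSimplex p) (hx : MixedAction x) (hi : i ∈ NRset x ε p) :
    0 < barOn p x (NRset x ε p) :=
  calc 0 < bar p x i := (bar_nonneg hp hx i).lt_of_ne' (bar_ne_zero_of_mem_NRset hi)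
    _ ≤ barOn p x (NRset x ε p) := bar_le_barOn hp hx hi

lemma xOn_NRset_mem_Icc (k : K) :
    xOn x (NRset x ε p) k ∈
      Set.Icc ((1 - ε) * barOn p x (NRset x ε p)) ((1 + ε) * barOn p x (NRset x ε p)) := by
  simp only [barOn, xOn, Finset.mul_sum]
  exact ⟨Finset.sum_le_sum fun j hj => ((Finset.mem_filter.mp hj).2.2 k).1,
    Finset.sum_le_sum fun j hj => ((Finset.mem_filter.mp hj).2.2 k).2⟩

lemma bar_silent (hp : pSimplex p) (hx : MixedAction x) :
    bar p (silent ε x p) i = bar p x i := by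
  by_cases hi : i ∈ NRset x ε p
  · have hB := (barOn_NRset_pos hp hx hi).ne'
    calc bar p (silent ε x p) i
        = ∑ k, ((1 - ε) / barOn p x (NRset x ε p) * (p k * xOn x (NRset x ε p) k) + ε * p k)
            * bar p x i :=
          Finset.sum_congr rfl fun k _ => by simp only [silent, if_pos hi]; ring
      _ = ((1 - ε) / barOn p x (NRset x ε p) * barOn p x (NRset x ε p) + ε) * bar p x i := by
          rw [← Finset.sum_mul, Finset.sum_add_distrib, ← Finset.mul_sum, ← Finset.mul_sum,
            sum_mul_xOn, hp.2, mul_one]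
      _ = bar p x i := by field_simp; ring
  · calc bar p (silent ε x p) i = ∑ k, ((1 - ε) * (p k * x k i) + ε * bar p x i * p k) :=
          Finset.sum_congr rfl fun k _ => by simp only [silent, if_neg hi]; ring
      _ = bar p x i := by
          rw [Finset.sum_add_distrib, ← Finset.mul_sum, ← Finset.mul_sum, hp.2, ← bar]; ring

lemma post_silent_of_mem (hp : pSimplex p) (hx : MixedAction x) (hi : i ∈ NRset x ε p)
    (k : K) : post p (silent ε x p) i k
      = ((1 - ε) * xOn x (NRset x ε p) k / barOn p x (NRset x ε p) + ε) * p k := by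
  have hib := bar_ne_zero_of_mem_NRset hi
  rw [post, bar_silent hp hx, if_pos hib, silent, if_pos hi]
  field_simp

lemma post_silent_of_not_mem (hp : pSimplex p) (hx : MixedAction x) (hi : i ∉ NRset x ε p)
    (k : K) : post p (silent ε x p) i k = (1 - ε) * post p x i k + ε * p k := by
  rw [post, post, bar_silent hp hx]
  by_cases hib : bar p x i = 0
  · simp only [hib, ne_eq, not_true_eq_false, if_false]
    ring
  · rw [if_pos hib, if_pos hib, silent, if_neg hi]
    field_simp

lemma abs_post_silent_sub_post_le_of_mem (hp : pSimplex p) (hx : MixedAction x)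
    (hε0 : 0 ≤ ε) (hε1 : ε ≤ 1) (hi : i ∈ NRset x ε p) (k : K) :
    |post p (silent ε x p) i k - post p x i k| ≤ 2 * ε * p k := by
  have hB := barOn_NRset_pos hp hx hi
  have hb := (bar_nonneg hp hx i).lt_of_ne' (bar_ne_zero_of_mem_NRset hi)
  obtain ⟨hu1, hu2⟩ := xOn_NRset_mem_Icc (p := p) (x := x) (ε := ε) k
  obtain ⟨-, hv⟩ := (Finset.mem_filter.mp hi).2
  set u := xOn x (NRset x ε p) k / barOn p x (NRset x ε p)
  set v := x k i / bar p x i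
  have hu : |u - 1| ≤ ε := abs_sub_le_iff.mpr
    ⟨by linarith [(div_le_iff₀ hB).mpr hu2], by linarith [(le_div_iff₀ hB).mpr hu1]⟩
  have hv : |1 - v| ≤ ε := abs_sub_le_iff.mpr
    ⟨by linarith [(le_div_iff₀ hb).mpr (hv k).1], by linarith [(div_le_iff₀ hb).mpr (hv k).2]⟩
  have hcoef : |(1 - ε) * u + ε - v| ≤ 2 * ε :=
    calc |(1 - ε) * u + ε - v| = |(1 - ε) * (u - 1) + (1 - v)| := by ring_nf
      _ ≤ (1 - ε) * |u - 1| + |1 - v| := by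
          grw [abs_add_le, abs_mul, abs_of_nonneg (sub_nonneg.mpr hε1)]
      _ ≤ 2 * ε := by nlinarith
  rw [post_silent_of_mem hp hx hi, post, if_pos (bar_ne_zero_of_mem_NRset hi),
    mul_div_assoc, ← div_mul_eq_mul_div, ← sub_mul, abs_mul, abs_of_nonneg (hp.1 k)]
  exact mul_le_mul_of_nonneg_right hcoef (hp.1 k)

lemma abs_post_silent_sub_post_le_of_not_mem (hp : pSimplex p) (hx : MixedAction x)
    (hε0 : 0 ≤ ε) (hi : i ∉ NRset x ε p) (k : K) :
    |post p (silent ε x p) i k - post p x i k| ≤ ε * (p k + post p x i k) := by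
  rw [post_silent_of_not_mem hp hx hi, show ∀ a b : ℝ, (1 - ε) * a + ε * b - a = ε * (b - a) by
    intros; ring, abs_mul, abs_of_nonneg hε0]
  exact mul_le_mul_of_nonneg_left
    (abs_sub_le_iff.mpr ⟨by linarith [post_nonneg hp hx i k], by linarith [hp.1 k]⟩) hε0

lemma sum_abs_post_silent_sub_post_le (hp : pSimplex p) (hx : MixedAction x)
    (hε0 : 0 ≤ ε) (hε1 : ε ≤ 1) (i : I) :
    ∑ k, |post p (silent ε x p) i k - post p x i k| ≤ 2 * ε := by
  by_cases hi : i ∈ NRset x ε p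
  · calc _ ≤ ∑ k, 2 * ε * p k :=
          Finset.sum_le_sum fun k _ => abs_post_silent_sub_post_le_of_mem hp hx hε0 hε1 hi k
      _ = 2 * ε := by rw [← Finset.mul_sum, hp.2, mul_one]
  · calc _ ≤ ∑ k, ε * (p k + post p x i k) :=
          Finset.sum_le_sum fun k _ => abs_post_silent_sub_post_le_of_not_mem hp hx hε0 hi k
      _ = 2 * ε := by rw [← Finset.mul_sum, Finset.sum_add_distrib, hp.2, sum_post hp]; ring

end Silent

section Pooling

variable {K I : Type*} [Fintype K] [Fintype I] {p : K → ℝ} {x : K → I → ℝ}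

/-- The Markov kernel sending each action of `N` to an action of `N` drawn proportionally to the
marginal, and fixing every other action. -/
def poolKernel (p : K → ℝ) (x : K → I → ℝ) (N : Finset I) (i i' : I) : ℝ :=
  if i ∈ N then (if i' ∈ N then bar p x i' / barOn p x N else 0) else if i' = i then 1 else 0

lemma poolKernel_nonneg (hp : pSimplex p) (hx : MixedAction x) (N : Finset I) (i i' : I) :
    0 ≤ poolKernel p x N i i' := by
  unfold poolKernel
  split_ifs
  · exact div_nonneg (bar_nonneg hp hx i') (barOn_nonneg hp hx N)
  all_goals norm_num

lemma sum_poolKernel_mul_post_of_mem (hp : pSimplex p) (hx : MixedAction x) {N : Finset I}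
    {i : I} (hi : i ∈ N) (k : K) :
    ∑ i', poolKernel p x N i i' * post p x i' k = xOn x N k * p k / barOn p x N := by
  simp only [poolKernel, if_pos hi, ite_mul, zero_mul, Finset.sum_ite_mem, Finset.univ_inter,
    div_mul_eq_mul_div, ← Finset.sum_div, bar_mul_post hp hx, ← Finset.sum_mul, xOn]

lemma sum_poolKernel_mul_post_of_not_mem {N : Finset I} {i : I} (hi : i ∉ N) (k : K) :
    ∑ i', poolKernel p x N i i' * post p x i' k = post p x i k := by
  simp [poolKernel, hi]

lemma sum_poolKernel_mul_bar (hp : pSimplex p) (hx : MixedAction x) (N : Finset I) (i' : I) :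
    ∑ i, poolKernel p x N i i' * bar p x i = bar p x i' := by
  by_cases hi' : i' ∈ N
  · calc ∑ i, poolKernel p x N i i' * bar p x i
          = ∑ i ∈ N, bar p x i' / barOn p x N * bar p x i := by
          rw [← Finset.sum_subset (Finset.subset_univ N) fun i _ hi => by
            simp [poolKernel, hi, ne_of_mem_of_not_mem hi' hi]]
          exact Finset.sum_congr rfl fun i hi => by simp [poolKernel, hi, hi']
      _ = bar p x i' := by
          rw [← Finset.mul_sum]
          refine div_mul_cancel_of_imp fun hB => le_antisymm ?_ (bar_nonneg hp hx i')
          exact hB ▸ bar_le_barOn hp hx hi'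
  · rw [Finset.sum_eq_single_of_mem i' (Finset.mem_univ _) fun j _ hj => by
      simp [poolKernel, hi', Ne.symm hj]]
    simp [poolKernel, hi']

def silentWeight (ε : ℝ) (x : K → I → ℝ) (p : K → ℝ) (i i' : I) : ℝ :=
  (1 - ε) * poolKernel p x (NRset x ε p) i i' + ε * bar p x i'

variable {ε : ℝ}

lemma silentWeight_nonneg (hp : pSimplex p) (hx : MixedAction x) (hε0 : 0 ≤ ε) (hε1 : ε ≤ 1)
    (i i' : I) : 0 ≤ silentWeight ε x p i i' :=
  add_nonneg (mul_nonneg (sub_nonneg.mpr hε1) (poolKernel_nonneg hp hx _ i i'))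
    (mul_nonneg hε0 (bar_nonneg hp hx i'))

lemma post_silent_eq_sum_silentWeight_mul_post (hp : pSimplex p) (hx : MixedAction x)
    (i : I) (k : K) :
    post p (silent ε x p) i k = ∑ i', silentWeight ε x p i i' * post p x i' k := by
  have hsplit : ∑ i', silentWeight ε x p i i' * post p x i' k
      = (1 - ε) * ∑ i', poolKernel p x (NRset x ε p) i i' * post p x i' k + ε * p k := by
    simp only [silentWeight, add_mul, mul_assoc, Finset.sum_add_distrib, ← Finset.mul_sum,
      sum_bar_mul_post hp hx]
  rw [hsplit]
  by_cases hi : i ∈ NRset x ε p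
  · rw [post_silent_of_mem hp hx hi, sum_poolKernel_mul_post_of_mem hp hx hi]
    ring
  · rw [post_silent_of_not_mem hp hx hi, sum_poolKernel_mul_post_of_not_mem hi]

lemma sum_silentWeight_mul_bar (hp : pSimplex p) (hx : MixedAction x) (i' : I) :
    ∑ i, silentWeight ε x p i i' * bar p x i = bar p x i' := by
  simp only [silentWeight, add_mul, mul_assoc, Finset.sum_add_distrib, ← Finset.mul_sum,
    sum_poolKernel_mul_bar hp hx, sum_bar hp hx]
  ring

end Pooling

section SmallRoot

variable {ε : ℝ}

lemma one_sub_sqrt_one_sub_four_mul_div_two_nonneg (hε : 0 ≤ ε) :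
    0 ≤ (1 - √(1 - 4 * ε)) / 2 := by
  have : √(1 - 4 * ε) ≤ 1 := Real.sqrt_le_one.mpr (by linarith)
  linarith

lemma one_sub_sqrt_one_sub_four_mul_div_two_le_one : (1 - √(1 - 4 * ε)) / 2 ≤ 1 := by
  linarith [Real.sqrt_nonneg (1 - 4 * ε)]

lemma one_sub_sqrt_one_sub_four_mul_div_two_le (hε : 0 ≤ ε) :
    (1 - √(1 - 4 * ε)) / 2 ≤ 2 * ε := by
  have : 1 - 4 * ε ≤ √(1 - 4 * ε) := Real.le_sqrt_self_iff.mpr (by linarith)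
  linarith

end SmallRoot

theorem silent_is_convexification_general {K I : Type*} [Fintype K] [Fintype I]
    (ε : ℝ) (hε0 : 0 < ε)
    (p : K → ℝ) (hp : pSimplex p)
    (x : K → I → ℝ) (hx : MixedAction x) :
    ∃ β : I → I → ℝ,
      (∀ i i', 0 ≤ β i i') ∧
      (∀ (i : I) (k : K),
        post p (silent ((1 - Real.sqrt (1 - 4*ε))/2) x p) i k = ∑ i', β i i' * post p x i' k) ∧
      (∀ i : I, bar p (silent ((1 - Real.sqrt (1 - 4*ε))/2) x p) i = bar p x i) ∧
      (∀ i' : I, ∑ i, β i i' * bar p x i = bar p x i') ∧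
      (∀ i : I,
        ∑ k, |post p (silent ((1 - Real.sqrt (1 - 4*ε))/2) x p) i k - post p x i k| ≤ 6 * ε) := by
  have h0 := one_sub_sqrt_one_sub_four_mul_div_two_nonneg hε0.le
  have h1 := one_sub_sqrt_one_sub_four_mul_div_two_le_one (ε := ε)
  have h2 := one_sub_sqrt_one_sub_four_mul_div_two_le hε0.le
  refine ⟨silentWeight ((1 - √(1 - 4 * ε)) / 2) x p, silentWeight_nonneg hp hx h0 h1,
    post_silent_eq_sum_silentWeight_mul_post hp hx, fun _ => bar_silent hp hx,
    sum_silentWeight_mul_bar hp hx, fun i => ?_⟩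
  linarith [sum_abs_post_silent_sub_post_le hp hx h0 h1 i]

/-- x' = c_{ε₀}(x,p) is a 6ε-convexification of x at p. -/
theorem silent_is_convexification {K I : Type*} [Fintype K] [Fintype I] [Nonempty K] [Nonempty I]
    (ε : ℝ) (hε0 : 0 < ε) (hε1 : ε ≤ 1/4)
    (p : K → ℝ) (hp : pSimplex p)
    (x : K → I → ℝ) (hx : MixedAction x) :
    ∃ β : I → I → ℝ,
      (∀ i i', 0 ≤ β i i') ∧
      (∀ (i : I) (k : K),
        post p (silent ((1 - Real.sqrt (1 - 4*ε))/2) x p) i k = ∑ i', β i i' * post p x i' k) ∧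
      (∀ i : I, bar p (silent ((1 - Real.sqrt (1 - 4*ε))/2) x p) i = bar p x i) ∧
      (∀ i' : I, ∑ i, β i i' * bar p x i = bar p x i') ∧
      (∀ i : I,
        ∑ k, |post p (silent ((1 - Real.sqrt (1 - 4*ε))/2) x p) i k - post p x i k| ≤ 6 * ε) :=
  silent_is_convexification_general ε hε0 p hp x hx
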